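/- Let ρ_AB and ρ_BC be two-qubit states, with t^A₁ ≥ t^A₂ the two largest eigenvalues of T_{ρ_AB}ᵀ T_{ρ_AB} and t^C₁ ≥ t^C₂ the two largest eigenvalues of T_{ρ_BC}ᵀ T_{ρ_BC}. Then the maximal bilocality parameter satisfies B_max = √(√(t^A₁ t^C₁) + √(t^A₂ t^C₂)) ≤ √2, with equality when ρ_AB and ρ_BC are both the singlet state |ψ⁻⟩⟨ψ⁻| with |ψ⁻⟩ = (|01⟩−|10⟩)/√2. -/

import Mathlib

open Matrix Kronecker Complex ComplexOrder

/-- The Pauli matrices σ₁ = σ_x, σ₂ = σ_y, σ₃ = σ_z. -/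
noncomputable def pauli : Fin 3 → Matrix (Fin 2) (Fin 2) ℂ :=
  ![!![0, 1; 1, 0], !![0, -Complex.I; Complex.I, 0], !![1, 0; 0, -1]]

/-- For v ∈ ℝ³, the matrix v·σ = v₁σ_x + v₂σ_y + v₃σ_z. -/
noncomputable def pauliVec (v : Fin 3 → ℝ) : Matrix (Fin 2) (Fin 2) ℂ :=
  (v 0 : ℂ) • pauli 0 + (v 1 : ℂ) • pauli 1 + (v 2 : ℂ) • pauli 2

/-- A two-qubit state: a 4×4 complex positive semidefinite matrix of trace 1. -/
def TwoQubitState (ρ : Matrix (Fin 2 × Fin 2) (Fin 2 × Fin 2) ℂ) : Prop :=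
  ρ.PosSemidef ∧ ρ.trace = 1

/-- The correlation matrix of a two-qubit state: (T_ρ)_{nm} = Tr[(σ_n ⊗ σ_m) ρ]. -/
noncomputable def corr (ρ : Matrix (Fin 2 × Fin 2) (Fin 2 × Fin 2) ℂ) :
    Matrix (Fin 3) (Fin 3) ℝ :=
  Matrix.of fun n m => ((pauli n ⊗ₖ pauli m) * ρ).trace.re

/-- The two largest eigenvalues (with multiplicity, in decreasing order) of a
    symmetric real 3×3 matrix, as the pair (largest, second largest). -/
noncomputable def topEigs (M : Matrix (Fin 3) (Fin 3) ℝ) : ℝ × ℝ :=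
  if h : M.IsHermitian then
    ((h.eigenvalues ∘ Tuple.sort h.eigenvalues) 2,
     (h.eigenvalues ∘ Tuple.sort h.eigenvalues) 1)
  else 0

/-- Computational basis vectors of ℂ² ⊗ ℂ² ≅ ℂ⁴. -/
def ket (i j : Fin 2) : (Fin 2 × Fin 2) → ℂ := fun p => if p = (i, j) then 1 else 0

/-- The singlet state |ψ⁻⟩ = (|01⟩ − |10⟩)/√2. -/
noncomputable def psiMinus : (Fin 2 × Fin 2) → ℂ := ((Real.sqrt 2 : ℂ))⁻¹ • (ket 0 1 - ket 1 0)

/-- The rank-one projection |v⟩⟨v|. -/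
noncomputable def proj (v : (Fin 2 × Fin 2) → ℂ) :
    Matrix (Fin 2 × Fin 2) (Fin 2 × Fin 2) ℂ :=
  Matrix.vecMulVec v (star v)

/-!
A unit-vector measurement `H = (a·σ) ⊗ (b·σ)` is a Hermitian involution, and
`Tr[H ρ] = aᵀ T_ρ b`. Nonnegativity of the variance, `Tr[H ρ]² ≤ Tr[H² ρ] = 1`, bounds the
operator norm of `T_ρ` by `1`, so every eigenvalue of `T_ρᵀ T_ρ` lies in `[0, 1]` and each
square root in `B_max` is at most `1`. For the singlet `T = -1`, so all four eigenvalues are `1`.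
-/

theorem Matrix.PosSemidef.sq_re_trace_mul_le {𝕜 n : Type*} [RCLike 𝕜] [Fintype n]
    [DecidableEq n] {ρ : Matrix n n 𝕜} (hρ : ρ.PosSemidef)
    (htr : ρ.trace = 1) {H : Matrix n n 𝕜} (hH : H.IsHermitian) :
    RCLike.re (H * ρ).trace ^ 2 ≤ RCLike.re (H * H * ρ).trace := by
  set t := RCLike.re (H * ρ).trace
  set D := t • (1 : Matrix n n 𝕜) - H
  have hD : Dᴴ = D := by simp [D, hH.eq]
  have hexpand : D * D * ρ = t ^ 2 • ρ - (2 * t) • (H * ρ) + H * H * ρ := by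
    simp only [D, sub_mul, mul_sub, smul_mul_assoc, mul_smul_comm, one_mul, mul_one]
    module
  -- `0 ≤ Tr[(t - H) ρ (t - H)]` with `t = Tr[H ρ]`
  have key := RCLike.nonneg_iff.mp (hρ.mul_mul_conjTranspose_same D).trace_nonneg |>.1
  rw [hD, trace_mul_cycle, hexpand] at key
  simp only [trace_add, trace_sub, trace_smul, htr, map_add, map_sub, RCLike.smul_re,
    RCLike.one_re] at key
  nlinarith

lemma pauliVec_mul_self (a : Fin 3 → ℝ) :
    pauliVec a * pauliVec a = ((a ⬝ᵥ a : ℝ) : ℂ) • 1 := by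
  ext i j
  fin_cases i <;> fin_cases j <;>
    simp [pauliVec, pauli, Matrix.mul_apply, Fin.sum_univ_succ, dotProduct] <;>
    ring_nf <;> simp [Complex.I_sq]

lemma isHermitian_pauliVec (a : Fin 3 → ℝ) : (pauliVec a).IsHermitian := by
  ext i j
  fin_cases i <;> fin_cases j <;> simp [pauliVec, pauli]

lemma re_trace_kronecker_pauliVec_mul (a b : Fin 3 → ℝ)
    (ρ : Matrix (Fin 2 × Fin 2) (Fin 2 × Fin 2) ℂ) :
    ((pauliVec a ⊗ₖ pauliVec b) * ρ).trace.re = a ⬝ᵥ corr ρ *ᵥ b := by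
  simp only [pauliVec, add_kronecker, kronecker_add, smul_kronecker, kronecker_smul,
    Matrix.add_mul, Matrix.smul_mul, Matrix.trace_add, Matrix.trace_smul, smul_eq_mul,
    Complex.add_re, dotProduct, mulVec, Fin.sum_univ_three, corr, Matrix.of_apply,
    Complex.re_ofReal_mul]
  ring

lemma sq_dotProduct_corr_mulVec_le {ρ : Matrix (Fin 2 × Fin 2) (Fin 2 × Fin 2) ℂ}
    (hρ : TwoQubitState ρ) (a b : Fin 3 → ℝ) :
    (a ⬝ᵥ corr ρ *ᵥ b) ^ 2 ≤ (a ⬝ᵥ a) * (b ⬝ᵥ b) := by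
  have hH : (pauliVec a ⊗ₖ pauliVec b).IsHermitian := by
    rw [IsHermitian, conjTranspose_kronecker, isHermitian_pauliVec, isHermitian_pauliVec]
  have hsq := hρ.1.sq_re_trace_mul_le hρ.2 hH
  rw [← mul_kronecker_mul, pauliVec_mul_self, pauliVec_mul_self, smul_kronecker,
    kronecker_smul, one_kronecker_one, smul_smul, smul_mul, one_mul, trace_smul, hρ.2] at hsq
  simpa [re_trace_kronecker_pauliVec_mul] using hsq

lemma Matrix.isHermitian_transpose_mul_self {m n : Type*} [Fintype m] (T : Matrix m n ℝ) :
    (Tᵀ * T).IsHermitian :=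
  conjTranspose_eq_transpose_of_trivial T ▸ isHermitian_conjTranspose_mul_self T

theorem Matrix.IsHermitian.eigenvalues_transpose_mul_self_mem_Icc {m n : Type*} [Fintype m]
    [Fintype n] [DecidableEq n] {T : Matrix m n ℝ}
    (hT : ∀ a b, (a ⬝ᵥ T *ᵥ b) ^ 2 ≤ (a ⬝ᵥ a) * (b ⬝ᵥ b))
    (h : (Tᵀ * T).IsHermitian) (j : n) : h.eigenvalues j ∈ Set.Icc 0 1 := by
  set v : n → ℝ := ⇑(h.eigenvectorBasis j)
  have hv : v ⬝ᵥ v = 1 := by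
    have := orthonormal_iff_ite.mp h.eigenvectorBasis.orthonormal j j
    rwa [if_pos rfl, EuclideanSpace.inner_eq_star_dotProduct, star_trivial,
      dotProduct_comm] at this
  have hμ : h.eigenvalues j = T *ᵥ v ⬝ᵥ T *ᵥ v := by
    rw [h.eigenvalues_eq, ← mulVec_mulVec, dotProduct_mulVec, vecMul_transpose]
    simp [v]
  have hμ_sq : h.eigenvalues j ^ 2 ≤ h.eigenvalues j := by
    simpa [hv, ← hμ] using hT (T *ᵥ v) v
  have hnn : 0 ≤ h.eigenvalues j := hμ ▸ dotProduct_self_star_nonneg _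
  exact ⟨hnn, by nlinarith⟩

lemma topEigs_mem {M : Matrix (Fin 3) (Fin 3) ℝ} (hM : M.IsHermitian) {S : Set ℝ}
    (hS : ∀ j, hM.eigenvalues j ∈ S) : (topEigs M).1 ∈ S ∧ (topEigs M).2 ∈ S := by
  rw [topEigs, dif_pos hM]
  exact ⟨hS _, hS _⟩

lemma topEigs_corr_mem_Icc {ρ : Matrix (Fin 2 × Fin 2) (Fin 2 × Fin 2) ℂ}
    (hρ : TwoQubitState ρ) :
    (topEigs ((corr ρ)ᵀ * corr ρ)).1 ∈ Set.Icc 0 1 ∧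
      (topEigs ((corr ρ)ᵀ * corr ρ)).2 ∈ Set.Icc 0 1 :=
  topEigs_mem _ ((Matrix.isHermitian_transpose_mul_self _).eigenvalues_transpose_mul_self_mem_Icc
    (sq_dotProduct_corr_mulVec_le hρ))

lemma topEigs_one : topEigs 1 = (1, 1) := by
  have h := topEigs_mem (S := {1}) isHermitian_one fun j ↦ by
    rw [← spectrum.one_eq (𝕜 := ℝ) (A := Matrix (Fin 3) (Fin 3) ℝ),
      isHermitian_one.spectrum_real_eq_range_eigenvalues]
    exact Set.mem_range_self j
  exact Prod.ext h.1 h.2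

lemma corr_proj_psiMinus : corr (proj psiMinus) = -1 := by
  ext n m
  fin_cases n <;> fin_cases m <;>
    simp [corr, proj, psiMinus, ket, pauli, trace, mul_apply, Fintype.sum_prod_type,
      vecMulVec_apply] <;>
    linear_combination (-1 / 2 : ℝ) * Real.mul_self_sqrt (zero_le_two (α := ℝ))

/-- The maximal bilocality parameter B_max = √(√(t^A₁ t^C₁) + √(t^A₂ t^C₂)) of any
    pair of two-qubit states is at most √2, with equality when both states are
    the singlet |ψ⁻⟩⟨ψ⁻|. -/
theorem bilocality_parameter_le_sqrt_two
    (ρAB ρBC : Matrix (Fin 2 × Fin 2) (Fin 2 × Fin 2) ℂ)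
    (hAB : TwoQubitState ρAB) (hBC : TwoQubitState ρBC)
    (tA1 tA2 tC1 tC2 : ℝ)
    (htA : topEigs ((corr ρAB)ᵀ * corr ρAB) = (tA1, tA2))
    (htC : topEigs ((corr ρBC)ᵀ * corr ρBC) = (tC1, tC2)) :
    Real.sqrt (Real.sqrt (tA1 * tC1) + Real.sqrt (tA2 * tC2)) ≤ Real.sqrt 2 ∧
    (ρAB = proj psiMinus → ρBC = proj psiMinus →
      Real.sqrt (Real.sqrt (tA1 * tC1) + Real.sqrt (tA2 * tC2)) = Real.sqrt 2) := by
  refine ⟨?_, fun hA hC ↦ ?_⟩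
  · obtain ⟨⟨-, hA1⟩, -, hA2⟩ := htA ▸ topEigs_corr_mem_Icc hAB
    obtain ⟨⟨hC1₀, hC1⟩, hC2₀, hC2⟩ := htC ▸ topEigs_corr_mem_Icc hBC
    have h1 : √(tA1 * tC1) ≤ 1 := Real.sqrt_le_one.mpr (mul_le_one₀ hA1 hC1₀ hC1)
    have h2 : √(tA2 * tC2) ≤ 1 := Real.sqrt_le_one.mpr (mul_le_one₀ hA2 hC2₀ hC2)
    exact Real.sqrt_le_sqrt (by linarith)
  · have hT : (corr (proj psiMinus))ᵀ * corr (proj psiMinus) = 1 := by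
      simp [corr_proj_psiMinus]
    rw [hA, hT, topEigs_one, Prod.mk.injEq] at htA
    rw [hC, hT, topEigs_one, Prod.mk.injEq] at htC
    obtain ⟨rfl, rfl⟩ := htA
    obtain ⟨rfl, rfl⟩ := htC
    norm_num
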